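/- arXiv:1504.03864 — 2 statements merged into one kernel-verified Lean document; each statement's English description precedes it below -/
import Mathlib

section
/- Let u₁, u₂, v₁, v₂ ∈ Σ* with v₁, v₂ nonempty, and suppose there is a mismatch between u₁ and u₂ (i.e., there is a position i with i < |u₁|, i < |u₂|, and u₁[i] ≠ u₂[i]). Then for every n ∈ ℕ, |Δ(u₁v₁ⁿ, u₂v₂ⁿ)| = |u₁| + |u₂| + n(|v₁| + |v₂|) - 2p, where p < min(|u₁|,|u₂|) is the length of the longest common prefix of u₁ and u₂; in particular |Δ(u₁v₁ⁿ, u₂v₂ⁿ)| ≥ n(|v₁|+|v₂|) ≥ n·2 > n for n ≥ 1. -/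
/-! Cancelling the longest common prefix `p` gives `Δ(p s₁ x, p s₂ y) = Δ(s₁ x, s₂ y)`. The
mismatch forces `s₁` and `s₂` to be nonempty with different first letters, so the word
`(s₁ x)⁻¹ (s₂ y)`, spelled letter by letter, has no cancellation at the junction: it is already
reduced, of length `|s₁| + |x| + |s₂| + |y|`. -/

variable {S G : Type}

def wordFG (w : List G) : FreeGroup G := (w.map FreeGroup.of).prod

def delta (v w : List G) : FreeGroup G := (wordFG v)⁻¹ * wordFG w

def dlen [DecidableEq G] (v w : List G) : ℕ := (delta v w).norm

def wpow (v : List G) (n : ℕ) : List G := (List.replicate n v).flatten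

structure NFT (S G Q : Type) where
  E : Set (Q × S × List G × Q)
  I : Set Q
  F : Set Q
  out : Q → List G

namespace NFT

variable {Q Q₁ Q₂ : Type}

inductive Run (T : NFT S G Q) : Q → List S → List G → Q → Prop
  | nil (q : Q) : Run T q [] [] q
  | cons {q q' q'' : Q} {a : S} {w : List G} {u : List S} {v : List G} :
      (q, a, w, q') ∈ T.E → Run T q' u v q'' → Run T q (a :: u) (w ++ v) q''

def Rel (T : NFT S G Q) (u : List S) (v : List G) : Prop :=
  ∃ i t w, i ∈ T.I ∧ t ∈ T.F ∧ T.Run i u w t ∧ v = w ++ T.out t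

def Trim (T : NFT S G Q) : Prop :=
  ∀ q : Q, ∃ i t u₁ w₁ u₂ w₂, i ∈ T.I ∧ t ∈ T.F ∧ T.Run i u₁ w₁ q ∧ T.Run q u₂ w₂ t

def WTP (T : NFT S G Q) : Prop :=
  ∀ q₁ q₂ (u v : List S) (u₁ u₂ v₁ v₂ : List G), T.Run q₁ u u₁ q₁ → T.Run q₁ v v₁ q₁ →
    T.Run q₁ u u₂ q₂ → T.Run q₂ v v₂ q₂ →
    delta u₁ u₂ = delta (u₁ ++ v₁) (u₂ ++ v₂)

def Seq (T : NFT S G Q) : Prop :=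
  (∃ q₀, T.I = {q₀}) ∧
  ∀ q a w₁ q₁ w₂ q₂, (q, a, w₁, q₁) ∈ T.E → (q, a, w₂, q₂) ∈ T.E → w₁ = w₂ ∧ q₁ = q₂

end NFT

namespace List

variable {α : Type*} {p l₁ l₂ : List α}

theorem IsPrefix.length_le_of_getElem?_ne (hp₁ : p <+: l₁) (hp₂ : p <+: l₂) {i : ℕ}
    (h : l₁[i]? ≠ l₂[i]?) : p.length ≤ i := by
  obtain ⟨s₁, rfl⟩ := hp₁
  obtain ⟨s₂, rfl⟩ := hp₂
  by_contra! hi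
  exact h (by rw [getElem?_append_left hi, getElem?_append_left hi])

theorem getElem?_length_ne_of_longest_common_prefix (hp₁ : p <+: l₁) (hp₂ : p <+: l₂)
    (hmax : ∀ q, q <+: l₁ → q <+: l₂ → q.length ≤ p.length) (hlt : p.length < l₁.length) :
    l₁[p.length]? ≠ l₂[p.length]? := by
  intro heq
  have extend : ∀ {l : List α}, p <+: l → p ++ l[p.length]?.toList <+: l := by
    rintro _ ⟨s, rfl⟩
    cases s <;> simp
  have := hmax _ (extend hp₁) (heq ▸ extend hp₂)
  simp [getElem?_eq_getElem hlt] at this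

end List

section Delay

theorem wordFG_eq_mk (w : List G) : wordFG w = FreeGroup.mk (w.map (·, true)) := by
  induction w with
  | nil => rfl
  | cons x l ih =>
    show FreeGroup.of x * wordFG l = _
    rw [ih, FreeGroup.of, FreeGroup.mul_mk]
    rfl

theorem delta_eq_mk (v w : List G) :
    delta v w = FreeGroup.mk (v.reverse.map (·, false) ++ w.map (·, true)) := by
  rw [delta, wordFG_eq_mk, wordFG_eq_mk, FreeGroup.inv_mk, FreeGroup.mul_mk]
  simp [FreeGroup.invRev, List.map_reverse, Function.comp_def]

theorem delta_append_append_left (p v w : List G) : delta (p ++ v) (p ++ w) = delta v w := by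
  simp only [delta, wordFG, List.map_append, List.prod_append, mul_inv_rev]
  group

theorem length_wpow (v : List G) (n : ℕ) : (wpow v n).length = n * v.length := by
  simp [wpow]

theorem isReduced_map_prodMk (w : List G) (b : Bool) : FreeGroup.IsReduced (w.map (·, b)) := by
  simpa [FreeGroup.IsReduced, List.isChain_map] using
    List.isChain_iff_getElem.mpr fun _ _ => trivial

variable [DecidableEq G]

theorem norm_delta_of_head?_ne {v w : List G} (h : v.head? ≠ w.head?) :
    (delta v w).norm = v.length + w.length := by
  have hred : FreeGroup.IsReduced (v.reverse.map (·, false) ++ w.map (·, true)) := by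
    refine List.isChain_append.mpr ⟨isReduced_map_prodMk _ _, isReduced_map_prodMk _ _, ?_⟩
    simp only [List.getLast?_map, List.head?_map, List.getLast?_reverse, Option.mem_map]
    rintro _ ⟨a, ha, rfl⟩ _ ⟨b, hb, rfl⟩ rfl
    exact absurd (ha.trans hb.symm) h
  rw [delta_eq_mk, FreeGroup.norm, FreeGroup.toWord_mk, hred.reduce_eq]
  simp

theorem dlen_add_of_getElem?_ne {p u₁ u₂ : List G} (hp₁ : p <+: u₁) (hp₂ : p <+: u₂)
    (h : u₁[p.length]? ≠ u₂[p.length]?) :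
    dlen u₁ u₂ + 2 * p.length = u₁.length + u₂.length := by
  obtain ⟨s₁, rfl⟩ := hp₁
  obtain ⟨s₂, rfl⟩ := hp₂
  simp only [List.getElem?_append_right le_rfl, Nat.sub_self, ← List.head?_eq_getElem?] at h
  rw [dlen, delta_append_append_left, norm_delta_of_head?_ne h]
  simp only [List.length_append]
  omega

end Delay

/-- If `v₁, v₂` are nonempty and there is a mismatch between `u₁` and `u₂`, then for all `n`,
`|Δ(u₁v₁ⁿ, u₂v₂ⁿ)| = |u₁| + |u₂| + n(|v₁|+|v₂|) - 2p`, where `p < min(|u₁|,|u₂|)` is the length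
of the longest common prefix of `u₁` and `u₂`; in particular the delay exceeds `n` for `n ≥ 1`. -/
theorem delay_growth_of_mismatch [DecidableEq G] (u₁ u₂ v₁ v₂ p : List G)
    (hv₁ : v₁ ≠ []) (hv₂ : v₂ ≠ [])
    (hmis : ∃ i, i < u₁.length ∧ i < u₂.length ∧ u₁[i]? ≠ u₂[i]?)
    (hp₁ : p <+: u₁) (hp₂ : p <+: u₂)
    (hmax : ∀ q : List G, q <+: u₁ → q <+: u₂ → q.length ≤ p.length) :
    p.length < min u₁.length u₂.length ∧
    ∀ n : ℕ,
      dlen (u₁ ++ wpow v₁ n) (u₂ ++ wpow v₂ n)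
        = u₁.length + u₂.length + n * (v₁.length + v₂.length) - 2 * p.length ∧
      n * (v₁.length + v₂.length) ≤ dlen (u₁ ++ wpow v₁ n) (u₂ ++ wpow v₂ n) ∧
      (1 ≤ n → n < dlen (u₁ ++ wpow v₁ n) (u₂ ++ wpow v₂ n)) := by
  obtain ⟨i, hi₁, hi₂, hi⟩ := hmis
  have hle := hp₁.length_le_of_getElem?_ne hp₂ hi
  have hlt₁ : p.length < u₁.length := hle.trans_lt hi₁
  have hlt₂ : p.length < u₂.length := hle.trans_lt hi₂
  have hne := List.getElem?_length_ne_of_longest_common_prefix hp₁ hp₂ hmax hlt₁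
  refine ⟨lt_min hlt₁ hlt₂, fun n => ?_⟩
  have hdlen := dlen_add_of_getElem?_ne (hp₁.trans (List.prefix_append u₁ (wpow v₁ n)))
    (hp₂.trans (List.prefix_append u₂ (wpow v₂ n)))
    (by rwa [List.getElem?_append_left hlt₁, List.getElem?_append_left hlt₂])
  simp only [List.length_append, length_wpow] at hdlen
  have hn₁ : n ≤ n * v₁.length := Nat.le_mul_of_pos_right n (List.length_pos_iff.mpr hv₁)
  have hn₂ : n ≤ n * v₂.length := Nat.le_mul_of_pos_right n (List.length_pos_iff.mpr hv₂)
  rw [Nat.mul_add]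
  omega
end

section
/- Let T be a transducer that does not satisfy the weak twinning property. Then there exists a run q₁ →^{u|u₁} q₁ →^{v|v₁} q₁ →^{u|u₂} q₂ →^{v|v₂} q₂ in T such that either |v₁| ≠ |v₂|, or v₁ and v₂ are both nonempty and there is a mismatch between u₁ and u₂ (a position where both are defined and differ). -/
/-! Pumping the loop `v` of a pattern violating the twinning equation yields patterns
`(uvⁿ | u₁v₁ⁿ, u₂v₂ⁿ)` for every `n`. If none of them is a witness, then `|v₁| = |v₂|` and,
when `v₁, v₂ ≠ ε`, the words `u₁v₁ⁿ` and `u₂v₂ⁿ` are prefix-comparable for all `n`. Say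
`|u₁| ≤ |u₂|`: then `u₂ = u₁t` and `v₁ⁿ` is a prefix of `tv₂ⁿ` for all `n`, which forces
`v₁t = tv₂`. Hence `Δ(u₁v₁, u₂v₂) = v₁⁻¹tv₂ = t = Δ(u₁, u₂)`, so the pattern satisfies the
twinning equation after all. -/

variable {S G : Type}

theorem wordFG_append (x y : List G) : wordFG (x ++ y) = wordFG x * wordFG y := by
  simp [wordFG]

theorem inv_delta (v w : List G) : (delta v w)⁻¹ = delta w v := by
  simp [delta]

theorem delta_append_eq_of_append_eq_append {u₁ u₂ v₁ v₂ t : List G} (hu : u₂ = u₁ ++ t)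
    (hv : v₁ ++ t = t ++ v₂) : delta u₁ u₂ = delta (u₁ ++ v₁) (u₂ ++ v₂) := by
  have hconj : wordFG v₁ * wordFG t = wordFG t * wordFG v₂ := by
    simpa only [wordFG_append] using congrArg wordFG hv
  simp only [delta, hu, wordFG_append, mul_inv_rev, mul_assoc]
  rw [← hconj]
  group

theorem wpow_succ (v : List G) (n : ℕ) : wpow v (n + 1) = v ++ wpow v n := by
  simp [wpow, List.replicate_succ]

theorem List.prefix_of_getElem?_eq {α : Type*} {a b : List α}
    (h : ∀ i, i < a.length → i < b.length → a[i]? = b[i]?) (hlen : a.length ≤ b.length) :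
    a <+: b :=
  List.prefix_iff_getElem?.2 fun i hi => by
    rw [← h i hi (by omega), List.getElem?_eq_getElem hi]

theorem append_eq_append_of_forall_wpow_prefix {t v₁ v₂ : List G}
    (hlen : v₁.length = v₂.length) (h : ∀ n, wpow v₁ n <+: t ++ wpow v₂ n) :
    v₁ ++ t = t ++ v₂ := by
  rcases eq_or_ne v₁ [] with rfl | hv
  · simp [List.eq_nil_of_length_eq_zero hlen.symm]
  -- With `n = |t|`, `t` is a prefix of `v₁ⁿ`, so `v₁t` and `tv₂` are prefixes of `tv₂ⁿ⁺¹`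
  -- of equal length.
  set n := t.length
  have hn : t.length ≤ (wpow v₁ n).length := by
    rw [length_wpow]; exact Nat.le_mul_of_pos_right n (List.length_pos_iff.2 hv)
  have ht : t <+: wpow v₁ n := List.prefix_of_prefix_length_le (List.prefix_append t _) (h n) hn
  have h₁ : v₁ ++ t <+: t ++ v₂ ++ wpow v₂ n := by
    have := h (n + 1)
    rw [wpow_succ, wpow_succ, ← List.append_assoc] at this
    exact ((List.prefix_append_right_inj v₁).2 ht).trans this
  have hlen' : (v₁ ++ t).length = (t ++ v₂).length := by simp [hlen, Nat.add_comm]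
  exact (List.prefix_of_prefix_length_le h₁ (List.prefix_append _ _) hlen'.le).eq_of_length hlen'

theorem delta_eq_delta_append_of_forall_wpow_agree {u₁ u₂ v₁ v₂ : List G}
    (hlen : v₁.length = v₂.length)
    (hagree : ∀ n, v₁ ≠ [] → v₂ ≠ [] → ∀ i, i < (u₁ ++ wpow v₁ n).length →
      i < (u₂ ++ wpow v₂ n).length → (u₁ ++ wpow v₁ n)[i]? = (u₂ ++ wpow v₂ n)[i]?) :
    delta u₁ u₂ = delta (u₁ ++ v₁) (u₂ ++ v₂) := by
  wlog hu : u₁.length ≤ u₂.length generalizing u₁ u₂ v₁ v₂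
  · rw [← inv_delta, this hlen.symm (fun n h₂ h₁ i hi₂ hi₁ => (hagree n h₁ h₂ i hi₁ hi₂).symm)
      (by omega), inv_delta]
  rcases eq_or_ne v₁ [] with rfl | hv₁
  · simp [List.eq_nil_of_length_eq_zero hlen.symm]
  have hv₂ : v₂ ≠ [] := List.ne_nil_of_length_pos (hlen ▸ List.length_pos_iff.2 hv₁)
  have hpre (n : ℕ) : u₁ ++ wpow v₁ n <+: u₂ ++ wpow v₂ n :=
    List.prefix_of_getElem?_eq (hagree n hv₁ hv₂) (by simp [length_wpow, hlen]; omega)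
  obtain ⟨t, rfl⟩ : u₁ <+: u₂ := by simpa [wpow] using hpre 0
  refine delta_append_eq_of_append_eq_append rfl
    (append_eq_append_of_forall_wpow_prefix hlen fun n => ?_)
  simpa using hpre n

namespace NFT.Run

variable {Q : Type} {T : NFT S G Q} {q q' q'' : Q}

theorem append {u u' : List S} {w w' : List G} (h : T.Run q u w q') (h' : T.Run q' u' w' q'') :
    T.Run q (u ++ u') (w ++ w') q'' := by
  induction h with
  | nil => simpa using h'
  | cons he _ ih =>
    rw [List.cons_append, List.append_assoc]
    exact .cons he (ih h')

theorem wpow {v : List S} {w : List G} (h : T.Run q v w q) (n : ℕ) :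
    T.Run q (_root_.wpow v n) (_root_.wpow w n) q := by
  induction n with
  | zero => exact .nil q
  | succ n ih => rw [wpow_succ, wpow_succ]; exact h.append ih

end NFT.Run

/-- If `T` does not satisfy the weak twinning property, then there is a run
`q₁ →u|u₁ q₁ →v|v₁ q₁ →u|u₂ q₂ →v|v₂ q₂` with either `|v₁| ≠ |v₂|`, or `v₁,v₂` nonempty and
a mismatch between `u₁` and `u₂`. -/
theorem exists_witness_of_not_wtp {Q : Type} (T : NFT S G Q) (h : ¬ T.WTP) :
    ∃ (q₁ q₂ : Q) (u v : List S) (u₁ u₂ v₁ v₂ : List G),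
      T.Run q₁ u u₁ q₁ ∧ T.Run q₁ v v₁ q₁ ∧ T.Run q₁ u u₂ q₂ ∧ T.Run q₂ v v₂ q₂ ∧
      (v₁.length ≠ v₂.length ∨
        (v₁ ≠ [] ∧ v₂ ≠ [] ∧ (∃ i, i < u₁.length ∧ i < u₂.length ∧ u₁[i]? ≠ u₂[i]?))) := by
  by_contra hwit
  refine h fun q₁ q₂ u v u₁ u₂ v₁ v₂ h₁ h₂ h₃ h₄ => ?_
  have hpump (n : ℕ) : ¬ _ := fun hd => hwit ⟨q₁, q₂, u ++ wpow v n, v, u₁ ++ wpow v₁ n,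
    u₂ ++ wpow v₂ n, v₁, v₂, h₁.append (h₂.wpow n), h₂, h₃.append (h₄.wpow n), h₄, hd⟩
  push Not at hpump
  exact delta_eq_delta_append_of_forall_wpow_agree (hpump 0).1 fun n => (hpump n).2
end
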